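/- For every positive integer n, m·n·‖V_n^{-1}‖² = Tr(S_n S_n*), where S_n = (Id_m | C_n^m | ⋯ | C_n^{(n−1)m}) and ‖·‖ is the Frobenius norm. -/

import Mathlib

open Matrix Polynomial Finset

noncomputable def frobNorm {α β : Type*} [Fintype α] [Fintype β] (A : Matrix α β ℂ) : ℝ :=
  Real.sqrt ((Aᴴ * A).trace.re)

noncomputable def condNum {k : Type*} [Fintype k] [DecidableEq k] (V : Matrix k k ℂ) : ℝ :=
  frobNorm V * frobNorm V⁻¹

noncomputable def vand (n : ℕ) (ζ : Fin n.totient → ℂ) :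
    Matrix (Fin n.totient) (Fin n.totient) ℂ :=
  fun i j => ζ i ^ (j : ℕ)

noncomputable def wMat (n : ℕ) (ζ : Fin n.totient → ℂ) :
    Matrix (Fin n.totient) (Fin (n.totient * n)) ℂ :=
  fun i j => ζ i ^ (j : ℕ)

noncomputable def compMat (n : ℕ) : Matrix (Fin n.totient) (Fin n.totient) ℂ :=
  fun i j =>
    if (i : ℕ) = (j : ℕ) + 1 then 1
    else if (j : ℕ) = n.totient - 1 then -((Polynomial.cyclotomic n ℂ).coeff i)
    else 0

noncomputable def sMat (n : ℕ) (hn : 0 < n) :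
    Matrix (Fin n.totient) (Fin (n.totient * n)) ℂ :=
  fun i j =>
    (compMat n ^ (((j : ℕ) / n.totient) * n.totient)) i
      ⟨(j : ℕ) % n.totient, Nat.mod_lt _ (Nat.totient_pos.mpr hn)⟩

noncomputable def Acoef (n : ℕ) : ℝ :=
  (((Finset.range n.totient).sup fun j => ((Polynomial.cyclotomic n ℤ).coeff j).natAbs : ℕ) : ℝ)

lemma vand_mul_comp (n : ℕ) (hn : 0 < n) (ζ : Fin n.totient → ℂ)
    (hζ' : ∀ i, IsPrimitiveRoot (ζ i) n) :
    vand n ζ * compMat n = Matrix.diagonal ζ * vand n ζ := by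
  have hm : 0 < n.totient := Nat.totient_pos.mpr hn
  ext i j
  rw [Matrix.mul_apply, Matrix.diagonal_mul]
  have hrhs : ζ i * vand n ζ i j = ζ i ^ ((j : ℕ) + 1) := by
    rw [vand, pow_succ, mul_comm]
  rw [hrhs]
  by_cases hj : (j : ℕ) = n.totient - 1
  · have hfalse : ∀ k : Fin n.totient, ¬ ((k : ℕ) = (j : ℕ) + 1) := fun k => by
      have := k.isLt; omega
    simp only [compMat, vand]
    rw [Finset.sum_congr rfl (fun k _ => by rw [if_neg (hfalse k), if_pos hj])]
    have heval : Polynomial.eval (ζ i) (Polynomial.cyclotomic n ℂ) = 0 :=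
      (hζ' i).isRoot_cyclotomic hn
    rw [Polynomial.eval_eq_sum_range] at heval
    rw [Polynomial.natDegree_cyclotomic, Finset.sum_range_succ] at heval
    have hlead : (Polynomial.cyclotomic n ℂ).coeff n.totient = 1 := by
      have := (Polynomial.cyclotomic.monic n ℂ).coeff_natDegree
      rwa [Polynomial.natDegree_cyclotomic] at this
    rw [hlead, one_mul] at heval
    have hsum : ∑ k : Fin n.totient,
        ζ i ^ (k : ℕ) * -((Polynomial.cyclotomic n ℂ).coeff k)
        = -∑ k ∈ Finset.range n.totient,
            (Polynomial.cyclotomic n ℂ).coeff k * ζ i ^ k := by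
      rw [← Finset.sum_neg_distrib, Fin.sum_univ_eq_sum_range
        (fun k => ζ i ^ k * -((Polynomial.cyclotomic n ℂ).coeff k))]
      exact Finset.sum_congr rfl fun k _ => by ring
    rw [hsum]
    have : ∑ k ∈ Finset.range n.totient,
        (Polynomial.cyclotomic n ℂ).coeff k * ζ i ^ k = -ζ i ^ n.totient := by
      linear_combination heval
    rw [this, neg_neg]
    congr 1
    omega
  · have hjlt : (j : ℕ) + 1 < n.totient := by have := j.isLt; omega
    simp only [compMat, vand, hj, if_false, mul_ite, mul_one, mul_zero]
    have hcond : ∀ k : Fin n.totient,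
        ((k : ℕ) = (j : ℕ) + 1) ↔ k = ⟨(j : ℕ) + 1, hjlt⟩ := fun k => by
      simp [Fin.ext_iff]
    rw [Finset.sum_congr rfl (fun k _ => by rw [if_congr (hcond k) rfl rfl])]
    simp

lemma vand_mul_comp_pow (n : ℕ) (hn : 0 < n) (ζ : Fin n.totient → ℂ)
    (hζ' : ∀ i, IsPrimitiveRoot (ζ i) n) (e : ℕ) :
    vand n ζ * compMat n ^ e = Matrix.diagonal (fun i => ζ i ^ e) * vand n ζ := by
  induction e with
  | zero => simp
  | succ e ih =>
    rw [pow_succ, ← Matrix.mul_assoc, ih, Matrix.mul_assoc,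
      vand_mul_comp n hn ζ hζ', ← Matrix.mul_assoc, Matrix.diagonal_mul_diagonal]
    have hfun : (fun i => ζ i ^ e * ζ i) = fun i => ζ i ^ (e + 1) :=
      funext fun i => (pow_succ _ _).symm
    rw [hfun]

lemma vand_mul_sMat (n : ℕ) (hn : 0 < n) (ζ : Fin n.totient → ℂ)
    (hζ' : ∀ i, IsPrimitiveRoot (ζ i) n) :
    vand n ζ * sMat n hn = wMat n ζ := by
  have hm : 0 < n.totient := Nat.totient_pos.mpr hn
  ext i j
  set e := ((j : ℕ) / n.totient) * n.totient with he
  set jm : Fin n.totient := ⟨(j : ℕ) % n.totient, Nat.mod_lt _ hm⟩ with hjm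
  have h1 : (vand n ζ * sMat n hn) i j = (vand n ζ * compMat n ^ e) i jm := rfl
  rw [h1, vand_mul_comp_pow n hn ζ hζ' e, Matrix.diagonal_mul]
  show ζ i ^ e * ζ i ^ ((j : ℕ) % n.totient) = wMat n ζ i j
  rw [wMat, ← pow_add]
  congr 1
  rw [he]
  exact Nat.div_add_mod' _ _

lemma wMat_mul_conjTranspose (n : ℕ) (hn : 0 < n) (ζ : Fin n.totient → ℂ)
    (hζ : Function.Injective ζ) (hζ' : ∀ i, IsPrimitiveRoot (ζ i) n) :
    wMat n ζ * (wMat n ζ)ᴴ = ((n.totient * n : ℕ) : ℂ) • 1 := by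
  ext i k
  rw [Matrix.mul_apply]
  have hpow : ∀ a : Fin n.totient, ζ a ^ n = 1 := fun a => (hζ' a).pow_eq_one
  have hnorm : ∀ a : Fin n.totient, Complex.normSq (ζ a) = 1 := fun a => by
    have h1 : ‖ζ a‖ = 1 := Complex.norm_eq_one_of_pow_eq_one (hpow a) hn.ne'
    rw [← Complex.sq_norm, h1, one_pow]
  set u : ℂ := ζ i * (starRingEnd ℂ) (ζ k) with hu
  have hterm : ∀ j : Fin (n.totient * n),
      wMat n ζ i j * (wMat n ζ)ᴴ j k = u ^ (j : ℕ) := fun j => by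
    simp [wMat, Matrix.conjTranspose_apply, hu, mul_pow, map_pow]
  rw [Finset.sum_congr rfl (fun j _ => hterm j),
    Fin.sum_univ_eq_sum_range (fun j => u ^ j)]
  have hun : u ^ n = 1 := by
    rw [hu, mul_pow, hpow, ← map_pow, hpow]
    simp
  by_cases hik : i = k
  · subst hik
    have hu1 : u = 1 := by
      rw [hu, Complex.mul_conj, hnorm i, Complex.ofReal_one]
    rw [hu1]
    simp [Matrix.smul_apply]
  · have hu1 : u ≠ 1 := by
      intro h
      apply hik
      apply hζ
      have : ζ i * ((starRingEnd ℂ) (ζ k) * ζ k) = ζ k := by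
        rw [← mul_assoc, ← hu, h, one_mul]
      rwa [mul_comm ((starRingEnd ℂ) (ζ k)) (ζ k), Complex.mul_conj, hnorm k,
        Complex.ofReal_one, mul_one] at this
    rw [geom_sum_eq hu1]
    have : u ^ (n.totient * n) = 1 := by
      rw [mul_comm, pow_mul, hun, one_pow]
    rw [this, sub_self, zero_div]
    simp [Matrix.one_apply_ne hik, hik]

lemma trace_conjTranspose_mul_self {α β : Type*} [Fintype α] [Fintype β]
    (A : Matrix α β ℂ) :
    (Aᴴ * A).trace = ((∑ j : β, ∑ i : α, Complex.normSq (A i j) : ℝ) : ℂ) := by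
  rw [Matrix.trace]
  push_cast
  refine Finset.sum_congr rfl fun j _ => ?_
  rw [Matrix.diag_apply, Matrix.mul_apply]
  refine Finset.sum_congr rfl fun i _ => ?_
  simp [Matrix.conjTranspose_apply, Complex.normSq_eq_conj_mul_self]

theorem mn_mul_frobNorm_sq_vand_inv_eq_trace (n : ℕ) (hn : 0 < n) (ζ : Fin n.totient → ℂ)
    (hζ : Function.Injective ζ) (hζ' : ∀ i, IsPrimitiveRoot (ζ i) n) :
    ((n.totient * n : ℕ) : ℂ) * ((frobNorm (vand n ζ)⁻¹ ^ 2 : ℝ) : ℂ) =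
      (sMat n hn * (sMat n hn)ᴴ).trace := by
  have hV : IsUnit (vand n ζ).det := by
    have : vand n ζ = Matrix.vandermonde ζ := rfl
    rw [this, Matrix.det_vandermonde]
    rw [isUnit_iff_ne_zero]
    refine Finset.prod_ne_zero_iff.mpr fun i _ => Finset.prod_ne_zero_iff.mpr fun j hj => ?_
    rw [sub_ne_zero]
    intro h
    have h2 := hζ h.symm
    subst h2
    simp at hj
  have hS : sMat n hn = (vand n ζ)⁻¹ * wMat n ζ := by
    rw [← vand_mul_sMat n hn ζ hζ', ← Matrix.mul_assoc,
      Matrix.nonsing_inv_mul _ hV, Matrix.one_mul]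
  have htr : (sMat n hn * (sMat n hn)ᴴ).trace
      = ((n.totient * n : ℕ) : ℂ) * (((vand n ζ)⁻¹)ᴴ * (vand n ζ)⁻¹).trace := by
    rw [hS, Matrix.conjTranspose_mul, Matrix.mul_assoc, ← Matrix.mul_assoc (wMat n ζ),
      wMat_mul_conjTranspose n hn ζ hζ hζ', Matrix.smul_mul, Matrix.one_mul,
      Matrix.mul_smul, Matrix.trace_smul, smul_eq_mul, Matrix.trace_mul_comm]
  rw [htr]
  congr 1
  rw [trace_conjTranspose_mul_self]
  have hnonneg : 0 ≤ ∑ j, ∑ i, Complex.normSq ((vand n ζ)⁻¹ i j) :=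
    Finset.sum_nonneg fun j _ => Finset.sum_nonneg fun i _ => Complex.normSq_nonneg _
  rw [frobNorm, trace_conjTranspose_mul_self]
  norm_cast
  exact Real.sq_sqrt hnonneg
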